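/- arXiv:1605.06477 — 2 statements merged into one kernel-verified Lean document; each statement's English description precedes it below -/
import Mathlib

section
/- Let Δ_1,…,Δ_p be square-integrable random variables and c, i distinct indices. If E[Δ_c²] ≥ E[Δ_i²] and E[Δ_c Δ_k] ≥ E[Δ_i Δ_k] for all k ∉ {c,i}, then E[(Σ_{k≠c} Δ_k)²] ≤ E[(Σ_{k≠i} Δ_k)²]. -/
/-!
With `T = ∑_{k ∉ {c, i}} Δ_k`, the two losses are `E[(Δ_i + T)²]` and `E[(Δ_c + T)²]`.
Expanding the squares, they differ only in `E[Δ_j²] + 2 E[Δ_j T]`, and `E[Δ_j T]` splits into the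
cross moments `E[Δ_j Δ_k]`, which the hypotheses compare term by term.
-/

open MeasureTheory Finset

section SecondMoments

variable {Ω : Type*} [MeasurableSpace Ω] {μ : Measure Ω}

theorem integral_add_sq {f g : Ω → ℝ} (hf : MemLp f 2 μ) (hg : MemLp g 2 μ) :
    ∫ ω, (f ω + g ω) ^ 2 ∂μ =
      ∫ ω, f ω ^ 2 ∂μ + 2 * ∫ ω, f ω * g ω ∂μ + ∫ ω, g ω ^ 2 ∂μ := by
  have hfg : Integrable (fun ω => f ω * g ω) μ := hf.integrable_mul hg
  have h2fg : Integrable (fun ω => 2 * (f ω * g ω)) μ := hfg.const_mul 2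
  have hsum : Integrable (fun ω => f ω ^ 2 + 2 * (f ω * g ω)) μ := hf.integrable_sq.add h2fg
  simp_rw [add_sq, mul_assoc]
  rw [integral_add hsum hg.integrable_sq, integral_add hf.integrable_sq h2fg, integral_const_mul]

theorem integral_add_sq_le_of_dominates {f g h : Ω → ℝ} (hf : MemLp f 2 μ) (hg : MemLp g 2 μ)
    (hh : MemLp h 2 μ) (hsq : ∫ ω, g ω ^ 2 ∂μ ≤ ∫ ω, f ω ^ 2 ∂μ)
    (hcorr : ∫ ω, g ω * h ω ∂μ ≤ ∫ ω, f ω * h ω ∂μ) :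
    ∫ ω, (g ω + h ω) ^ 2 ∂μ ≤ ∫ ω, (f ω + h ω) ^ 2 ∂μ := by
  rw [integral_add_sq hg hh, integral_add_sq hf hh]
  linarith

theorem integral_mul_finsetSum {ι : Type*} (s : Finset ι) {f : Ω → ℝ} {g : ι → Ω → ℝ}
    (hf : MemLp f 2 μ) (hg : ∀ k ∈ s, MemLp (g k) 2 μ) :
    ∫ ω, f ω * ∑ k ∈ s, g k ω ∂μ = ∑ k ∈ s, ∫ ω, f ω * g k ω ∂μ := by
  simp_rw [mul_sum]
  exact integral_finsetSum s fun k hk => hf.integrable_mul (hg k hk)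

end SecondMoments

theorem stmt_2_general {Ω : Type*} [MeasurableSpace Ω] (μ : Measure Ω)
    {p : ℕ} (Δ : Fin p → Ω → ℝ) (hΔ : ∀ k, MemLp (Δ k) 2 μ)
    (c i : Fin p)
    (h1 : ∫ ω, (Δ c ω) ^ 2 ∂μ ≥ ∫ ω, (Δ i ω) ^ 2 ∂μ)
    (h2 : ∀ k, k ≠ c → k ≠ i → ∫ ω, Δ c ω * Δ k ω ∂μ ≥ ∫ ω, Δ i ω * Δ k ω ∂μ) :
    ∫ ω, (∑ k ∈ univ \ {c}, Δ k ω) ^ 2 ∂μ ≤ ∫ ω, (∑ k ∈ univ \ {i}, Δ k ω) ^ 2 ∂μ := by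
  obtain rfl | hci := eq_or_ne c i
  · exact le_rfl
  set A := (univ.erase c).erase i
  have hsum_c (ω : Ω) : ∑ k ∈ univ \ {c}, Δ k ω = Δ i ω + ∑ k ∈ A, Δ k ω := by
    rw [sdiff_singleton_eq_erase, ← add_sum_erase _ _ (mem_erase.2 ⟨hci.symm, mem_univ i⟩)]
  have hsum_i (ω : Ω) : ∑ k ∈ univ \ {i}, Δ k ω = Δ c ω + ∑ k ∈ A, Δ k ω := by
    rw [sdiff_singleton_eq_erase, ← add_sum_erase _ _ (mem_erase.2 ⟨hci, mem_univ c⟩),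
      erase_right_comm]
  have hcorr : ∫ ω, Δ i ω * ∑ k ∈ A, Δ k ω ∂μ ≤ ∫ ω, Δ c ω * ∑ k ∈ A, Δ k ω ∂μ := by
    rw [integral_mul_finsetSum A (hΔ i) fun k _ => hΔ k,
      integral_mul_finsetSum A (hΔ c) fun k _ => hΔ k]
    refine sum_le_sum fun k hk => ?_
    obtain ⟨hki, hkc, -⟩ := mem_erase.1 hk |>.imp_right mem_erase.1
    exact h2 k hkc hki
  simp_rw [hsum_c, hsum_i]
  exact integral_add_sq_le_of_dominates (hΔ c) (hΔ i) (memLp_finsetSum A fun k _ => hΔ k)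
    h1 hcorr

/-- Optimality: under the second-moment and cross-correlation dominance of `c`,
correcting `c` gives a smaller expected loss than correcting `i`. -/
theorem stmt_2 {Ω : Type*} [MeasurableSpace Ω] (μ : Measure Ω) [IsProbabilityMeasure μ]
    {p : ℕ} (Δ : Fin p → Ω → ℝ) (hΔ : ∀ k, MemLp (Δ k) 2 μ)
    (c i : Fin p) (hci : c ≠ i)
    (h1 : ∫ ω, (Δ c ω) ^ 2 ∂μ ≥ ∫ ω, (Δ i ω) ^ 2 ∂μ)
    (h2 : ∀ k, k ≠ c → k ≠ i → ∫ ω, Δ c ω * Δ k ω ∂μ ≥ ∫ ω, Δ i ω * Δ k ω ∂μ) :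
    ∫ ω, (∑ k ∈ univ \ {c}, Δ k ω) ^ 2 ∂μ ≤ ∫ ω, (∑ k ∈ univ \ {i}, Δ k ω) ^ 2 ∂μ :=
  stmt_2_general μ Δ hΔ c i h1 h2
end

section
/- Under the conditions E[Δ_c²] ≥ E[Δ_i²] for all i ≠ c and E[Δ_c Δ_k] ≥ E[Δ_i Δ_k] for all i ≠ k ≠ c, the index c minimizes the post-feedback loss: E[(Σ_{k≠c} Δ_k)²] = min over i of E[(Σ_{k≠i} Δ_k)²]. -/
/-!
Expanding the square, `E[(∑_{k ∈ A} Δ_k)²] = ∑_{j,k ∈ A} G j k` for the Gram matrix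
`G j k = E[Δ_j Δ_k]`. With `T` the indices other than `i` and `c`, the two index sets are
`T ∪ {c}` and `T ∪ {i}`, so the losses differ by
`(G c c - G i i) + 2 ∑_{k ∈ T} (G c k - G i k) ≥ 0`.
-/

open MeasureTheory Finset

section GramSum

variable {ι M : Type*} [DecidableEq ι] [AddCommMonoid M]

theorem Finset.sum_sum_insert (G : ι → ι → M) {T : Finset ι} {c : ι} (hc : c ∉ T) :
    ∑ j ∈ insert c T, ∑ k ∈ insert c T, G j k
      = G c c + ∑ k ∈ T, (G c k + G k c) + ∑ j ∈ T, ∑ k ∈ T, G j k := by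
  simp only [sum_insert hc, sum_add_distrib]
  abel

variable [PartialOrder M] [IsOrderedAddMonoid M]

theorem Finset.sum_sum_erase_le_sum_sum_erase {G : ι → ι → M} (hG : ∀ j k, G j k = G k j)
    {s : Finset ι} {i c : ι} (hi : i ∈ s) (hc : c ∈ s) (hic : i ≠ c) (hdiag : G i i ≤ G c c)
    (hoff : ∀ k ∈ s, k ≠ i → k ≠ c → G i k ≤ G c k) :
    ∑ j ∈ s.erase c, ∑ k ∈ s.erase c, G j k ≤ ∑ j ∈ s.erase i, ∑ k ∈ s.erase i, G j k := by
  set T := (s.erase i).erase c with hT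
  have hsi : s.erase i = insert c T := (insert_erase (mem_erase.2 ⟨hic.symm, hc⟩)).symm
  have hsc : s.erase c = insert i T := by
    rw [hT, erase_right_comm]
    exact (insert_erase (mem_erase.2 ⟨hic, hi⟩)).symm
  have hcT : c ∉ T := by simp [hT]
  have hiT : i ∉ T := by simp [hT]
  rw [hsi, hsc, sum_sum_insert G hcT, sum_sum_insert G hiT]
  refine add_le_add_left (add_le_add hdiag (sum_le_sum fun k hk => ?_)) _
  obtain ⟨hkc, hki, hks⟩ : k ≠ c ∧ k ≠ i ∧ k ∈ s := by simpa [hT] using hk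
  rw [hG k i, hG k c]
  exact add_le_add (hoff k hks hki hkc) (hoff k hks hki hkc)

end GramSum

theorem MeasureTheory.integral_sq_sum_eq_sum_sum_integral_mul {Ω ι : Type*} [MeasurableSpace Ω]
    {μ : Measure Ω} {f : ι → Ω → ℝ} (s : Finset ι) (hf : ∀ k ∈ s, MemLp (f k) 2 μ) :
    ∫ ω, (∑ k ∈ s, f k ω) ^ 2 ∂μ = ∑ j ∈ s, ∑ k ∈ s, ∫ ω, f j ω * f k ω ∂μ := by
  have hmul : ∀ j ∈ s, ∀ k ∈ s, Integrable (fun ω => f j ω * f k ω) μ := fun j hj k hk =>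
    (hf j hj).integrable_mul (hf k hk)
  simp_rw [sq, sum_mul_sum]
  rw [integral_finsetSum s fun j hj => integrable_finsetSum s (hmul j hj)]
  exact sum_congr rfl fun j hj => integral_finsetSum s (hmul j hj)

theorem stmt_3_general {Ω : Type*} [MeasurableSpace Ω] (μ : Measure Ω)
    {p : ℕ} (Δ : Fin p → Ω → ℝ) (hΔ : ∀ k, MemLp (Δ k) 2 μ) (c : Fin p)
    (h1 : ∀ i, i ≠ c → ∫ ω, (Δ c ω) ^ 2 ∂μ ≥ ∫ ω, (Δ i ω) ^ 2 ∂μ)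
    (h2 : ∀ i k, i ≠ k → k ≠ c → i ≠ c →
      ∫ ω, Δ c ω * Δ k ω ∂μ ≥ ∫ ω, Δ i ω * Δ k ω ∂μ) :
    IsLeast (Set.range fun i : Fin p => ∫ ω, (∑ k ∈ univ \ {i}, Δ k ω) ^ 2 ∂μ)
      (∫ ω, (∑ k ∈ univ \ {c}, Δ k ω) ^ 2 ∂μ) := by
  refine ⟨⟨c, rfl⟩, ?_⟩
  rintro _ ⟨i, rfl⟩
  obtain rfl | hic := eq_or_ne i c
  · exact le_rfl
  simp only [sdiff_singleton_eq_erase,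
    integral_sq_sum_eq_sum_sum_integral_mul _ fun k _ => hΔ k]
  refine sum_sum_erase_le_sum_sum_erase (fun j k => by simp only [mul_comm])
    (mem_univ i) (mem_univ c) hic ?_ fun k _ hki hkc => h2 i k hki.symm hkc hic
  simpa only [sq] using h1 i hic

/-- Under the dominance conditions, `c` achieves the minimum post-feedback loss. -/
theorem stmt_3 {Ω : Type*} [MeasurableSpace Ω] (μ : Measure Ω) [IsProbabilityMeasure μ]
    {p : ℕ} (Δ : Fin p → Ω → ℝ) (hΔ : ∀ k, MemLp (Δ k) 2 μ) (c : Fin p)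
    (h1 : ∀ i, i ≠ c → ∫ ω, (Δ c ω) ^ 2 ∂μ ≥ ∫ ω, (Δ i ω) ^ 2 ∂μ)
    (h2 : ∀ i k, i ≠ k → k ≠ c → i ≠ c →
      ∫ ω, Δ c ω * Δ k ω ∂μ ≥ ∫ ω, Δ i ω * Δ k ω ∂μ) :
    IsLeast (Set.range fun i : Fin p => ∫ ω, (∑ k ∈ univ \ {i}, Δ k ω) ^ 2 ∂μ)
      (∫ ω, (∑ k ∈ univ \ {c}, Δ k ω) ^ 2 ∂μ) :=
  stmt_3_general μ Δ hΔ c h1 h2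
end
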